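/- arXiv:1908.07077 — 2 statements merged into one kernel-verified Lean document; each statement's English description precedes it below -/
import Mathlib

section
/- Let X be a real Hilbert space, let M : X → 2^X be a maximally monotone operator with Z = zer M ≠ ∅, let x₀ ∈ X, and let (γ_n) be a sequence in (0,∞) with inf_n γ_n > 0. For every n let x̃_n ∈ X and let K_n : X → X be a monotone operator such that ran K_n ⊂ ran(K_n + γ_n M) and K_n + γ_n M is injective. Define y_n = J^{K_n}_{γ_n M} x̃_n, y_n* = γ_n^{-1}(K_n x̃_n − K_n y_n), x_{n+1/2} = x_n + (⟪y_n − x_n, y_n*⟫/‖y_n*‖²) y_n* if ⟪y_n − x_n, y_n*⟫ < 0 and x_{n+1/2} = x_n otherwise, and x_{n+1} = Q(x₀, x_n, x_{n+1/2}), the projection of x₀ onto H(x₀,x_n) ∩ H(x_n,x_{n+1/2}). Then: (i) Σ_n ‖x_{n+1} − x_n‖² < ∞ and Σ_n ‖x_{n+1/2} − x_n‖² < ∞; (ii) if moreover x̃_n − x_n → 0 strongly and the implication [⟪x̃_n − y_n, N(K_n x̃_n − K_n y_n)⟫ → 0 ⟹ (x̃_n − y_n ⇀ 0 weakly and K_n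 x̃_n − K_n y_n → 0 strongly)] holds, then (x_n) converges strongly to proj_Z x₀, the point of Z nearest x₀. -/
/-
Every zero `z` of `M` satisfies `⟪z - yₙ, yₙ*⟫ ≤ 0`, so `zer M` lies in each `H(xₙ, x_{n+1/2})`
and, inductively, in each `H(x₀, xₙ)`. Pythagoras in these half-spaces gives
`‖x₀ - xₙ‖² + ‖x_{n+1} - xₙ‖² ≤ ‖x₀ - x_{n+1}‖² ≤ d(x₀, zer M)²` and
`‖x_{n+1/2} - xₙ‖ ≤ ‖x_{n+1} - xₙ‖`, whence (i).

For (ii), `⟪x̃ₙ - yₙ, N(Kₙ x̃ₙ - Kₙ yₙ)⟫ ≤ ‖x̃ₙ - xₙ‖ + ‖x_{n+1/2} - xₙ‖ → 0`, so `yₙ* → 0`, and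
monotonicity of `M` gives `limsup ⟪xₙ - p, u⟫ ≤ 0` for every `(p, u) ∈ gra M`. In place of a weak
cluster point take a point `w` common to the closed convex hulls of all tails of `(xₙ)`; it
exists because the projections of a point onto a decreasing sequence of bounded closed convex
sets form a Cauchy sequence. Then `⟪w - p, u⟫ ≤ 0` on `gra M`, so `w ∈ zer M` by maximality, and
`w ∈ H(x₀, xₙ)` together with `‖x₀ - w‖ ≤ lim ‖x₀ - xₙ‖` forces `xₙ → w`.
-/

open Filter Topology RealInnerProductSpace

/-- `N(u) = u/‖u‖` if `u ≠ 0`, and `N(0) = 0`. -/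
noncomputable def nrmz {X : Type*} [NormedAddCommGroup X] [Module ℝ X] (u : X) : X :=
  open Classical in if u = 0 then 0 else ‖u‖⁻¹ • u

/-- The half-space `H(x,y) = {u : ⟪u - y, x - y⟫ ≤ 0}`. -/
def Hset {X : Type*} [NormedAddCommGroup X] [InnerProductSpace ℝ X] (x y : X) : Set X :=
  {u | ⟪u - y, x - y⟫ ≤ 0}

section InnerProductSpace

variable {X : Type*} [NormedAddCommGroup X] [InnerProductSpace ℝ X]

def IsNearestPoint (C : Set X) (x₀ p : X) : Prop :=
  p ∈ C ∧ ∀ w ∈ C, ‖x₀ - p‖ ≤ ‖x₀ - w‖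

lemma convex_Hset (x y : X) : Convex ℝ (Hset x y) := by
  have hH : Hset x y = {u | innerSL ℝ (x - y) u ≤ ⟪x - y, y⟫} := by
    ext u
    show ⟪u - y, x - y⟫ ≤ 0 ↔ innerSL ℝ (x - y) u ≤ ⟪x - y, y⟫
    rw [innerSL_apply_apply, inner_sub_left, real_inner_comm u, real_inner_comm y, sub_nonpos]
  rw [hH]
  exact convex_halfSpace_le (innerSL ℝ (x - y)).toLinearMap.isLinear _

lemma sq_norm_add_sq_norm_le_of_mem_Hset {x y v : X} (hv : v ∈ Hset x y) :
    ‖x - y‖ ^ 2 + ‖v - y‖ ^ 2 ≤ ‖x - v‖ ^ 2 := by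
  have hv : ⟪v - y, x - y⟫ ≤ 0 := hv
  rw [show x - v = (x - y) - (v - y) by abel, norm_sub_sq_real (x - y) (v - y), real_inner_comm]
  linarith

lemma IsNearestPoint.subset_Hset {C : Set X} {x₀ p : X} (hC : Convex ℝ C)
    (hp : IsNearestPoint C x₀ p) : C ⊆ Hset x₀ p := by
  have : Nonempty C := ⟨⟨p, hp.1⟩⟩
  have hinf : ‖x₀ - p‖ = ⨅ w : C, ‖x₀ - w‖ :=
    le_antisymm (le_ciInf fun w => hp.2 w w.2)
      (ciInf_le ⟨0, Set.forall_mem_range.2 fun _ => norm_nonneg _⟩ (⟨p, hp.1⟩ : C))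
  intro w hw
  show ⟪w - p, x₀ - p⟫ ≤ 0
  rw [real_inner_comm]
  exact (norm_eq_iInf_iff_real_inner_le_zero hC hp.1).1 hinf w hw

lemma exists_isNearestPoint [CompleteSpace X] {C : Set X} (hne : C.Nonempty)
    (hcl : IsClosed C) (hconv : Convex ℝ C) (x₀ : X) : ∃ p, IsNearestPoint C x₀ p := by
  obtain ⟨p, hp, hinf⟩ := exists_norm_eq_iInf_of_complete_convex hne hcl.isComplete hconv x₀
  refine ⟨p, hp, fun w hw => ?_⟩
  rw [hinf]
  exact ciInf_le ⟨0, Set.forall_mem_range.2 fun _ => norm_nonneg _⟩ (⟨w, hw⟩ : C)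

lemma norm_sub_le_of_le_norm_sub_midpoint {x₀ v v' : X} {r ρ : ℝ} (hr : 0 ≤ r)
    (hmid : r ≤ ‖x₀ - midpoint ℝ v v'‖) (hv : ‖x₀ - v‖ ≤ ρ) (hv' : ‖x₀ - v'‖ ≤ ρ) :
    ‖v - v'‖ ≤ 2 * √(ρ ^ 2 - r ^ 2) := by
  have hpar := parallelogram_law_with_norm ℝ (x₀ - v) (x₀ - v')
  rw [show (x₀ - v) + (x₀ - v') = (2 : ℝ) • (x₀ - midpoint ℝ v v') by
      rw [midpoint_eq_smul_add, invOf_eq_inv]; module,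
    show (x₀ - v) - (x₀ - v') = v' - v by abel, norm_smul, Real.norm_two, norm_sub_rev v' v] at hpar
  have hsq : ‖v - v'‖ ^ 2 ≤ 4 * (ρ ^ 2 - r ^ 2) := by
    nlinarith [norm_nonneg (x₀ - v), norm_nonneg (x₀ - v')]
  have hρr : 0 ≤ ρ ^ 2 - r ^ 2 := by nlinarith [sq_nonneg ‖v - v'‖]
  nlinarith [Real.sq_sqrt hρr, Real.sqrt_nonneg (ρ ^ 2 - r ^ 2), norm_nonneg (v - v')]

/-- The nearest points to `0` of the sets `C n` form a Cauchy sequence, by the parallelogram law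
applied to their midpoints. -/
theorem nonempty_iInter_of_antitone_of_isClosed_of_convex [CompleteSpace X] {C : ℕ → Set X}
    (hanti : Antitone C) (hne : ∀ n, (C n).Nonempty) (hcl : ∀ n, IsClosed (C n))
    (hconv : ∀ n, Convex ℝ (C n)) (hbdd : Bornology.IsBounded (C 0)) :
    (⋂ n, C n).Nonempty := by
  obtain ⟨R, hR⟩ := isBounded_iff_forall_norm_le.1 hbdd
  choose v hv using fun n => exists_isNearestPoint (hne n) (hcl n) (hconv n) 0
  set r : ℕ → ℝ := fun n => ‖0 - v n‖
  have hrmono : Monotone r := fun m n hmn => (hv m).2 _ (hanti hmn (hv n).1)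
  have hrbdd : BddAbove (Set.range r) := ⟨R, by
    rintro _ ⟨n, rfl⟩
    simpa [r] using hR _ (hanti (Nat.zero_le n) (hv n).1)⟩
  obtain ⟨ρ, hr⟩ : ∃ ρ, Tendsto r atTop (𝓝 ρ) := ⟨_, tendsto_atTop_ciSup hrmono hrbdd⟩
  have hrρ : ∀ n, r n ≤ ρ := hrmono.ge_of_tendsto hr
  have hdist : ∀ n m N, N ≤ n → N ≤ m → dist (v n) (v m) ≤ 2 * √(ρ ^ 2 - r N ^ 2) :=
    fun n m N hn hm => by
      rw [dist_eq_norm]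
      refine norm_sub_le_of_le_norm_sub_midpoint (norm_nonneg _) ((hv N).2 _ ?_)
        ((hv n).2 _ (hv n).1 |>.trans (hrρ n)) ((hv m).2 _ (hv m).1 |>.trans (hrρ m))
      exact (hconv N).midpoint_mem (hanti hn (hv n).1) (hanti hm (hv m).1)
  have hlim : Tendsto (fun N => 2 * √(ρ ^ 2 - r N ^ 2)) atTop (𝓝 0) := by
    have h := ((hr.pow 2).const_sub (ρ ^ 2)).sqrt.const_mul 2
    rwa [sub_self, Real.sqrt_zero, mul_zero] at h
  obtain ⟨w, hw⟩ := cauchySeq_tendsto_of_complete (cauchySeq_of_le_tendsto_0 _ hdist hlim)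
  exact ⟨w, Set.mem_iInter.2 fun n => (hcl n).mem_of_tendsto hw
    (eventually_atTop.2 ⟨n, fun m hm => hanti hm (hv m).1⟩)⟩

def tailHull (x : ℕ → X) (n : ℕ) : Set X :=
  closure (convexHull ℝ (x '' Set.Ici n))

lemma tailHull_subset {x : ℕ → X} {n : ℕ} {S : Set X} (hS : ∀ m, n ≤ m → x m ∈ S)
    (hconv : Convex ℝ S) (hcl : IsClosed S) : tailHull x n ⊆ S :=
  closure_minimal (convexHull_min (by rintro _ ⟨m, hm, rfl⟩; exact hS m hm) hconv) hcl

lemma tailHull_subset_closedBall {x : ℕ → X} {x₀ : X} {B : ℝ} (hB : ∀ n, ‖x₀ - x n‖ ≤ B)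
    (n : ℕ) : tailHull x n ⊆ Metric.closedBall x₀ B :=
  tailHull_subset (fun m _ => mem_closedBall_iff_norm'.2 (hB m)) (convex_closedBall _ _)
    Metric.isClosed_closedBall

lemma nonempty_iInter_tailHull [CompleteSpace X] {x : ℕ → X} {x₀ : X} {B : ℝ}
    (hB : ∀ n, ‖x₀ - x n‖ ≤ B) : (⋂ n, tailHull x n).Nonempty :=
  nonempty_iInter_of_antitone_of_isClosed_of_convex
    (fun _ _ h => closure_mono (convexHull_mono (Set.image_mono (Set.Ici_subset_Ici.2 h))))
    (fun n => ⟨x n, subset_closure (subset_convexHull ℝ _ ⟨n, Set.self_mem_Ici, rfl⟩)⟩)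
    (fun _ => isClosed_closure) (fun _ => (convex_convexHull ℝ _).closure)
    ((Metric.isBounded_closedBall (x := x₀) (r := B)).subset (tailHull_subset_closedBall hB 0))

lemma le_of_mem_iInter_tailHull {x : ℕ → X} {w : X} (hw : w ∈ ⋂ n, tailHull x n)
    (ℓ : X →L[ℝ] ℝ) {c : ℝ} (h : ∀ ε > 0, ∀ᶠ n in atTop, ℓ (x n) ≤ c + ε) : ℓ w ≤ c := by
  refine le_of_forall_pos_le_add fun ε hε => ?_
  obtain ⟨N, hN⟩ := eventually_atTop.1 (h ε hε)
  exact tailHull_subset hN (convex_halfSpace_le ℓ.toLinearMap.isLinear _)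
    (isClosed_le ℓ.continuous continuous_const) (Set.mem_iInter.1 hw N)

def IsMonotoneOperator (M : X → Set X) : Prop :=
  ∀ x y u v, u ∈ M x → v ∈ M y → 0 ≤ ⟪x - y, u - v⟫

lemma IsMonotoneOperator.inner_sub_nonpos {M : X → Set X} (hM : IsMonotoneOperator M)
    {y z s : X} (hs : s ∈ M y) (hz : 0 ∈ M z) : ⟪z - y, s⟫ ≤ 0 := by
  have h := hM y z s 0 hs hz
  rw [sub_zero, ← neg_sub z y, inner_neg_left] at h
  linarith

lemma IsMonotoneOperator.mem_of_forall_inner_nonneg {M : X → Set X} (hM : IsMonotoneOperator M)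
    (hmax : ∀ A : X → Set X, IsMonotoneOperator A → (∀ x, M x ⊆ A x) → ∀ x, A x ⊆ M x)
    {w v : X} (h : ∀ p u, u ∈ M p → 0 ≤ ⟪w - p, v - u⟫) : v ∈ M w := by
  let A : X → Set X := fun q => M q ∪ {u | q = w ∧ u = v}
  have hA : IsMonotoneOperator A := by
    rintro x y u u' (hu | ⟨hx, hu⟩) (hu' | ⟨hy, hu'⟩)
    · exact hM _ _ _ _ hu hu'
    · rw [hy, hu', ← neg_sub w x, ← neg_sub v u, inner_neg_neg]
      exact h x u hu
    · rw [hx, hu]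
      exact h y u' hu'
    · rw [hx, hu, hy, hu', sub_self, inner_zero_left]
  exact hmax A hA (fun _ => Set.subset_union_left) w (Or.inr ⟨rfl, rfl⟩)

lemma IsMonotoneOperator.zero_mem_of_mem_iInter_tailHull {M : X → Set X}
    (hM : IsMonotoneOperator M)
    (hmax : ∀ A : X → Set X, IsMonotoneOperator A → (∀ x, M x ⊆ A x) → ∀ x, A x ⊆ M x)
    {x : ℕ → X} {w : X} (hw : w ∈ ⋂ n, tailHull x n)
    (h : ∀ p u, u ∈ M p → ∀ ε > 0, ∀ᶠ n in atTop, ⟪u, x n⟫ ≤ ⟪u, p⟫ + ε) : 0 ∈ M w := by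
  refine hM.mem_of_forall_inner_nonneg hmax fun p u hu => ?_
  have hle := le_of_mem_iInter_tailHull hw (innerSL ℝ u) fun ε hε => by
    simpa only [innerSL_apply_apply] using h p u hu ε hε
  rw [innerSL_apply_apply] at hle
  rw [zero_sub, inner_neg_right, inner_sub_left, real_inner_comm u w, real_inner_comm u p]
  linarith

lemma IsMonotoneOperator.inner_sub_le {M : X → Set X} (hM : IsMonotoneOperator M)
    {x xt y s p u : X} (hs : s ∈ M y) (hu : u ∈ M p) (hsK : 0 ≤ ⟪xt - y, s⟫) :
    ⟪x - p, u⟫ ≤ ⟪x - y, u⟫ + (‖xt - x‖ + ‖x - p‖) * ‖s‖ := by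
  have hmon := hM y p s u hs hu
  rw [inner_sub_right] at hmon
  have hyp : ⟪y - p, s⟫ = -⟪xt - y, s⟫ + ⟪xt - x, s⟫ + ⟪x - p, s⟫ := by
    rw [← inner_neg_left, ← inner_add_left, ← inner_add_left]
    congr 1
    abel
  have hxp : ⟪x - p, u⟫ = ⟪x - y, u⟫ + ⟪y - p, u⟫ := by
    rw [← inner_add_left, sub_add_sub_cancel]
  linarith [real_inner_le_norm (xt - x) s, real_inner_le_norm (x - p) s]

lemma IsMonotoneOperator.eventually_inner_le {M : X → Set X} (hM : IsMonotoneOperator M)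
    {x xt y s : ℕ → X} {x₀ : X} {B : ℝ} (hs : ∀ n, s n ∈ M (y n))
    (hsK : ∀ n, 0 ≤ ⟪xt n - y n, s n⟫) (hB : ∀ n, ‖x₀ - x n‖ ≤ B)
    (hxt : Tendsto (fun n => xt n - x n) atTop (𝓝 0))
    (hweak : ∀ u, Tendsto (fun n => ⟪xt n - y n, u⟫) atTop (𝓝 0))
    (hs0 : Tendsto (fun n => ‖s n‖) atTop (𝓝 0)) {p u : X} (hu : u ∈ M p) {ε : ℝ} (hε : 0 < ε) :
    ∀ᶠ n in atTop, ⟪u, x n⟫ ≤ ⟪u, p⟫ + ε := by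
  have hxy : Tendsto (fun n => ⟪x n - y n, u⟫) atTop (𝓝 0) := by
    have h := (hweak u).sub (hxt.inner (tendsto_const_nhds (x := u)))
    rw [inner_zero_left, sub_zero] at h
    refine h.congr fun n => ?_
    rw [← inner_sub_left, sub_sub_sub_cancel_left]
  have hη : Tendsto (fun n => ⟪x n - y n, u⟫ + (‖xt n - x n‖ + (B + ‖x₀ - p‖)) * ‖s n‖)
      atTop (𝓝 0) := by
    simpa using hxy.add ((hxt.norm.add_const _).mul hs0)
  filter_upwards [hη.eventually_le_const hε] with n hn
  have hxp : ‖x n - p‖ ≤ B + ‖x₀ - p‖ := by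
    rw [← sub_sub_sub_cancel_left p (x n) x₀]
    exact (norm_sub_le _ _).trans (by linarith [hB n])
  have hle : ⟪x n - p, u⟫ ≤ ε := by
    linarith [hM.inner_sub_le (x := x n) (hs n) hu (hsK n),
      mul_le_mul_of_nonneg_right hxp (norm_nonneg (s n))]
  rw [inner_sub_left] at hle
  rw [real_inner_comm (x n), real_inner_comm p]
  linarith

/-- `halfStep x y s` is the projection of `x` onto `{z | ⟪z - y, s⟫ ≤ 0}` (the step
`x ↦ x_{n+1/2}` of the algorithm). -/
noncomputable def halfStep (x y s : X) : X :=
  if ⟪y - x, s⟫ < 0 then x + (⟪y - x, s⟫ / ‖s‖ ^ 2) • s else x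

lemma halfStep_sub_of_neg {x y s : X} (h : ⟪y - x, s⟫ < 0) :
    halfStep x y s - x = (⟪y - x, s⟫ / ‖s‖ ^ 2) • s := by
  rw [halfStep, if_pos h, add_sub_cancel_left]

lemma sq_norm_pos_of_inner_neg {x y s : X} (h : ⟪y - x, s⟫ < 0) : 0 < ‖s‖ ^ 2 := by
  have hs : s ≠ 0 := by rintro rfl; simp at h
  positivity

lemma mem_Hset_halfStep {x y s z : X} (hz : ⟪z - y, s⟫ ≤ 0) : z ∈ Hset x (halfStep x y s) := by
  show ⟪z - halfStep x y s, x - halfStep x y s⟫ ≤ 0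
  by_cases h : ⟪y - x, s⟫ < 0
  · have hs := sq_norm_pos_of_inner_neg h
    set t := ⟪y - x, s⟫ / ‖s‖ ^ 2
    have ht : t < 0 := div_neg_of_neg_of_pos h hs
    have hts : t * ‖s‖ ^ 2 = ⟪y - x, s⟫ := div_mul_cancel₀ _ hs.ne'
    have hzy : ⟪z - y, s⟫ = ⟪z - x, s⟫ - ⟪y - x, s⟫ := by
      rw [← inner_sub_left, sub_sub_sub_cancel_right]
    rw [show z - halfStep x y s = (z - x) - t • s by rw [← halfStep_sub_of_neg h]; abel,
      show x - halfStep x y s = -(t • s) by rw [← halfStep_sub_of_neg h]; abel,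
      inner_neg_right, inner_sub_left, real_inner_smul_left, real_inner_smul_right,
      real_inner_smul_right, real_inner_self_eq_norm_sq]
    nlinarith
  · simp [halfStep, if_neg h]

lemma inner_sub_le_norm_halfStep_sub_mul (x y s : X) :
    ⟪x - y, s⟫ ≤ ‖halfStep x y s - x‖ * ‖s‖ := by
  rw [← neg_sub y x, inner_neg_left]
  by_cases h : ⟪y - x, s⟫ < 0
  · have hs := sq_norm_pos_of_inner_neg h
    rw [halfStep_sub_of_neg h, norm_smul, Real.norm_eq_abs,
      abs_of_neg (div_neg_of_neg_of_pos h hs), mul_assoc, ← sq, neg_mul,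
      div_mul_cancel₀ _ hs.ne']
  · have := mul_nonneg (norm_nonneg (halfStep x y s - x)) (norm_nonneg s)
    linarith

lemma nrmz_smul_of_pos (u : X) {t : ℝ} (ht : 0 < t) : nrmz (t • u) = nrmz u := by
  by_cases hu : u = 0
  · rw [hu, smul_zero]
  · rw [nrmz, nrmz, if_neg (smul_ne_zero ht.ne' hu), if_neg hu, norm_smul,
      Real.norm_of_nonneg ht.le, smul_smul]
    congr 1
    field_simp

lemma inner_nrmz_eq (v s : X) : ⟪v, nrmz s⟫ = ‖s‖⁻¹ * ⟪v, s⟫ := by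
  by_cases hs : s = 0
  · simp [nrmz, hs]
  · rw [nrmz, if_neg hs, real_inner_smul_right]

lemma inner_nrmz_nonneg {v s : X} (h : 0 ≤ ⟪v, s⟫) : 0 ≤ ⟪v, nrmz s⟫ := by
  rw [inner_nrmz_eq]
  positivity

lemma inner_nrmz_le {v s : X} {c : ℝ} (hc : 0 ≤ c) (h : ⟪v, s⟫ ≤ c * ‖s‖) :
    ⟪v, nrmz s⟫ ≤ c := by
  rw [inner_nrmz_eq]
  rcases (norm_nonneg s).eq_or_lt with hs | hs
  · rw [← hs, inv_zero, zero_mul]; exact hc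
  · rw [inv_mul_le_iff₀ hs, mul_comm]; exact h

lemma inner_nrmz_le_norm_add_norm_halfStep (xt x y s : X) :
    ⟪xt - y, nrmz s⟫ ≤ ‖xt - x‖ + ‖halfStep x y s - x‖ := by
  refine inner_nrmz_le (by positivity) ?_
  rw [← sub_add_sub_cancel xt x y, inner_add_left, add_mul]
  exact add_le_add (real_inner_le_norm _ _) (inner_sub_le_norm_halfStep_sub_mul x y s)

lemma tendsto_inner_nrmz_halfStep {xt x y s xh : ℕ → X}
    (hxh : ∀ n, xh n = halfStep (x n) (y n) (s n)) (hs : ∀ n, 0 ≤ ⟪xt n - y n, s n⟫)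
    (hxt : Tendsto (fun n => xt n - x n) atTop (𝓝 0))
    (hxh0 : Tendsto (fun n => ‖xh n - x n‖) atTop (𝓝 0)) :
    Tendsto (fun n => ⟪xt n - y n, nrmz (s n)⟫) atTop (𝓝 0) :=
  squeeze_zero (fun n => inner_nrmz_nonneg (hs n))
    (fun n => hxh n ▸ inner_nrmz_le_norm_add_norm_halfStep _ _ _ _)
    (by simpa using hxt.norm.add hxh0)

lemma tendsto_inv_smul_of_le {γ : ℕ → ℝ} {d : ℕ → X} {c : ℝ} (hc : 0 < c)
    (hcγ : ∀ n, c ≤ γ n) (hd : Tendsto d atTop (𝓝 0)) :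
    Tendsto (fun n => (γ n)⁻¹ • d n) atTop (𝓝 0) := by
  refine squeeze_zero_norm (fun n => ?_) (by simpa using hd.norm.const_mul c⁻¹)
  rw [norm_smul, Real.norm_of_nonneg (inv_nonneg.2 (hc.le.trans (hcγ n)))]
  exact mul_le_mul_of_nonneg_right (inv_anti₀ hc (hcγ n)) (norm_nonneg _)

/-- `x (n + 1) = Q(x₀, x n, xh n)` for every `n`, starting from `x 0 = x₀`. -/
def IsHaugazeauSeq (x₀ : X) (x xh : ℕ → X) : Prop :=
  x 0 = x₀ ∧ ∀ n, IsNearestPoint (Hset x₀ (x n) ∩ Hset (x n) (xh n)) x₀ (x (n + 1))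

/-- Pythagoras in `H(x₀, xₙ)`: `‖xₙ - w‖² ≤ ‖x₀ - w‖² - ‖x₀ - xₙ‖²`. -/
lemma tendsto_of_forall_mem_Hset {x₀ w : X} {x : ℕ → X} {L : ℝ}
    (hL : Tendsto (fun n => ‖x₀ - x n‖) atTop (𝓝 L)) (hw : ∀ n, w ∈ Hset x₀ (x n))
    (hwL : ‖x₀ - w‖ ≤ L) : Tendsto x atTop (𝓝 w) := by
  have hbound : ∀ n, ‖x n - w‖ ^ 2 ≤ L ^ 2 - ‖x₀ - x n‖ ^ 2 := fun n => by
    have := sq_norm_add_sq_norm_le_of_mem_Hset (hw n)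
    rw [norm_sub_rev w] at this
    nlinarith [norm_nonneg (x₀ - w)]
  have hsq : Tendsto (fun n => ‖x n - w‖ ^ 2) atTop (𝓝 0) := by
    have h := (hL.pow 2).const_sub (L ^ 2)
    rw [sub_self] at h
    exact squeeze_zero (fun _ => sq_nonneg _) hbound h
  rw [tendsto_iff_norm_sub_tendsto_zero]
  simpa [Real.sqrt_sq (norm_nonneg _)] using hsq.sqrt

namespace IsHaugazeauSeq

variable {x₀ : X} {x xh : ℕ → X} {Z : Set X}

lemma subset_Hset (h : IsHaugazeauSeq x₀ x xh) (hZ : ∀ n, Z ⊆ Hset (x n) (xh n)) (n : ℕ) :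
    Z ⊆ Hset x₀ (x n) := by
  induction n with
  | zero => intro z _; simp [Hset, h.1]
  | succ n ih =>
    exact fun z hz => (h.2 n).subset_Hset ((convex_Hset _ _).inter (convex_Hset _ _))
      ⟨ih hz, hZ n hz⟩

lemma norm_sub_le (h : IsHaugazeauSeq x₀ x xh) (hZ : ∀ n, Z ⊆ Hset (x n) (xh n)) {z : X}
    (hz : z ∈ Z) (n : ℕ) : ‖x₀ - x n‖ ≤ ‖x₀ - z‖ := by
  cases n with
  | zero => simp [h.1]
  | succ n => exact (h.2 n).2 z ⟨h.subset_Hset hZ n hz, hZ n hz⟩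

lemma sq_norm_add_sq_norm_le (h : IsHaugazeauSeq x₀ x xh) (n : ℕ) :
    ‖x₀ - x n‖ ^ 2 + ‖x (n + 1) - x n‖ ^ 2 ≤ ‖x₀ - x (n + 1)‖ ^ 2 :=
  sq_norm_add_sq_norm_le_of_mem_Hset (h.2 n).1.1

lemma monotone_norm_sub (h : IsHaugazeauSeq x₀ x xh) : Monotone fun n => ‖x₀ - x n‖ :=
  monotone_nat_of_le_succ fun n => by
    have := h.sq_norm_add_sq_norm_le n
    exact (pow_le_pow_iff_left₀ (norm_nonneg _) (norm_nonneg _) two_ne_zero).1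
      (by linarith [sq_nonneg ‖x (n + 1) - x n‖])

lemma summable_sq_norm_succ_sub (h : IsHaugazeauSeq x₀ x xh)
    (hZ : ∀ n, Z ⊆ Hset (x n) (xh n)) {z : X} (hz : z ∈ Z) :
    Summable fun n => ‖x (n + 1) - x n‖ ^ 2 := by
  have htel : ∀ n, ∑ i ∈ Finset.range n, ‖x (i + 1) - x i‖ ^ 2 ≤ ‖x₀ - x n‖ ^ 2 := by
    intro n
    induction n with
    | zero => simp
    | succ n ih =>
      rw [Finset.sum_range_succ]
      linarith [h.sq_norm_add_sq_norm_le n]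
  exact summable_of_sum_range_le (fun n => sq_nonneg _) fun n => (htel n).trans
    (pow_le_pow_left₀ (norm_nonneg _) (h.norm_sub_le hZ hz n) 2)

lemma sq_norm_sub_le_sq_norm_succ_sub (h : IsHaugazeauSeq x₀ x xh) (n : ℕ) :
    ‖xh n - x n‖ ^ 2 ≤ ‖x (n + 1) - x n‖ ^ 2 := by
  have := sq_norm_add_sq_norm_le_of_mem_Hset (h.2 n).1.2
  rw [norm_sub_rev (x n), norm_sub_rev (x n)] at this
  linarith [sq_nonneg ‖x (n + 1) - xh n‖]

theorem isNearestPoint_and_tendsto (h : IsHaugazeauSeq x₀ x xh)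
    (hZ : ∀ n, Z ⊆ Hset (x n) (xh n)) {w : X} (hwZ : w ∈ Z) (hw : w ∈ tailHull x 0) :
    IsNearestPoint Z x₀ w ∧ Tendsto x atTop (𝓝 w) := by
  have hbdd : BddAbove (Set.range fun n => ‖x₀ - x n‖) :=
    ⟨‖x₀ - w‖, Set.forall_mem_range.2 (h.norm_sub_le hZ hwZ)⟩
  set L := ⨆ n, ‖x₀ - x n‖
  have hwL : ‖x₀ - w‖ ≤ L :=
    mem_closedBall_iff_norm'.1 (tailHull_subset_closedBall (le_ciSup hbdd) 0 hw)
  refine ⟨⟨hwZ, fun z hz => hwL.trans (ciSup_le (h.norm_sub_le hZ hz))⟩, ?_⟩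
  exact tendsto_of_forall_mem_Hset (tendsto_atTop_ciSup h.monotone_norm_sub hbdd)
    (fun n => h.subset_Hset hZ n hwZ) hwL

end IsHaugazeauSeq

end InnerProductSpace

theorem stmt_1_general
    {X : Type*} [NormedAddCommGroup X] [InnerProductSpace ℝ X] [CompleteSpace X]
    (M : X → Set X)
    (hMmono : ∀ x y u v, u ∈ M x → v ∈ M y → (0:ℝ) ≤ ⟪x - y, u - v⟫)
    (hMmax : ∀ A : X → Set X,
      (∀ x y u v, u ∈ A x → v ∈ A y → (0:ℝ) ≤ ⟪x - y, u - v⟫) →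
      (∀ x, M x ⊆ A x) → ∀ x, A x ⊆ M x)
    (hZ : ∃ z, (0:X) ∈ M z)
    (x₀ : X)
    (γ : ℕ → ℝ) (hγpos : ∀ n, 0 < γ n) (hγinf : ∃ c, 0 < c ∧ ∀ n, c ≤ γ n)
    (xt : ℕ → X) (K : ℕ → X → X)
    (hKmono : ∀ n x y, (0:ℝ) ≤ ⟪x - y, K n x - K n y⟫)
    (y ystar x xh : ℕ → X)
    (hy : ∀ n, (γ n)⁻¹ • (K n (xt n) - K n (y n)) ∈ M (y n))
    (hystar : ∀ n, ystar n = (γ n)⁻¹ • (K n (xt n) - K n (y n)))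
    (hx0 : x 0 = x₀)
    (hxh : ∀ n, xh n =
      if ⟪y n - x n, ystar n⟫ < 0 then
        x n + (⟪y n - x n, ystar n⟫ / ‖ystar n‖ ^ 2) • ystar n
      else x n)
    (hQ : ∀ n, x (n + 1) ∈ Hset x₀ (x n) ∩ Hset (x n) (xh n) ∧
      ∀ w ∈ Hset x₀ (x n) ∩ Hset (x n) (xh n), ‖x₀ - x (n + 1)‖ ≤ ‖x₀ - w‖) :
    (Summable (fun n => ‖x (n + 1) - x n‖ ^ 2) ∧
      Summable (fun n => ‖xh n - x n‖ ^ 2)) ∧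
    (Tendsto (fun n => xt n - x n) atTop (𝓝 (0:X)) →
      (Tendsto (fun n => ⟪xt n - y n, nrmz (K n (xt n) - K n (y n))⟫) atTop (𝓝 (0:ℝ)) →
        (∀ u : X, Tendsto (fun n => ⟪xt n - y n, u⟫) atTop (𝓝 (0:ℝ))) ∧
          Tendsto (fun n => K n (xt n) - K n (y n)) atTop (𝓝 (0:X))) →
      ∃ z, (0:X) ∈ M z ∧ (∀ w, (0:X) ∈ M w → ‖x₀ - z‖ ≤ ‖x₀ - w‖) ∧
        Tendsto x atTop (𝓝 z)) := by
  obtain ⟨z₀, hz₀⟩ := hZ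
  have hM : IsMonotoneOperator M := hMmono
  have hH : IsHaugazeauSeq x₀ x xh := ⟨hx0, hQ⟩
  have hxh' : ∀ n, xh n = halfStep (x n) (y n) (ystar n) := hxh
  have hys : ∀ n, ystar n ∈ M (y n) := fun n => hystar n ▸ hy n
  have hZH : ∀ n, {z | (0 : X) ∈ M z} ⊆ Hset (x n) (xh n) := fun n z hz =>
    hxh' n ▸ mem_Hset_halfStep (hM.inner_sub_nonpos (hys n) hz)
  have hsum := hH.summable_sq_norm_succ_sub hZH hz₀
  have hsumh : Summable fun n => ‖xh n - x n‖ ^ 2 :=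
    hsum.of_nonneg_of_le (fun _ => sq_nonneg _) hH.sq_norm_sub_le_sq_norm_succ_sub
  refine ⟨⟨hsum, hsumh⟩, fun hxt hK => ?_⟩
  have hsK : ∀ n, 0 ≤ ⟪xt n - y n, ystar n⟫ := fun n => by
    rw [hystar n, real_inner_smul_right]
    exact mul_nonneg (inv_nonneg.2 (hγpos n).le) (hKmono n _ _)
  have hxh0 : Tendsto (fun n => ‖xh n - x n‖) atTop (𝓝 0) := by
    simpa [Real.sqrt_sq (norm_nonneg _)] using hsumh.tendsto_atTop_zero.sqrt
  obtain ⟨hweak, hKlim⟩ := hK <| by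
    simpa only [hystar, nrmz_smul_of_pos _ (inv_pos.2 (hγpos _))] using
      tendsto_inner_nrmz_halfStep hxh' hsK hxt hxh0
  obtain ⟨c, hc, hcγ⟩ := hγinf
  have hs0 : Tendsto (fun n => ‖ystar n‖) atTop (𝓝 0) := by
    simpa only [hystar, norm_zero] using (tendsto_inv_smul_of_le hc hcγ hKlim).norm
  have hB := hH.norm_sub_le hZH hz₀
  obtain ⟨w, hw⟩ := nonempty_iInter_tailHull hB
  have hwZ : (0 : X) ∈ M w := hM.zero_mem_of_mem_iInter_tailHull hMmax hw fun p u hu _ hε =>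
    hM.eventually_inner_le hys hsK hB hxt hweak hs0 hu hε
  obtain ⟨hnear, hlim⟩ := hH.isNearestPoint_and_tendsto hZH hwZ (Set.mem_iInter.1 hw 0)
  exact ⟨w, hwZ, hnear.2, hlim⟩

/-- Theorem 4.8 (warped proximal iterations, strong convergence). -/
theorem stmt_1
    {X : Type*} [NormedAddCommGroup X] [InnerProductSpace ℝ X] [CompleteSpace X]
    (M : X → Set X)
    (hMmono : ∀ x y u v, u ∈ M x → v ∈ M y → (0:ℝ) ≤ ⟪x - y, u - v⟫)
    (hMmax : ∀ A : X → Set X,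
      (∀ x y u v, u ∈ A x → v ∈ A y → (0:ℝ) ≤ ⟪x - y, u - v⟫) →
      (∀ x, M x ⊆ A x) → ∀ x, A x ⊆ M x)
    (hZ : ∃ z, (0:X) ∈ M z)
    (x₀ : X)
    (γ : ℕ → ℝ) (hγpos : ∀ n, 0 < γ n) (hγinf : ∃ c, 0 < c ∧ ∀ n, c ≤ γ n)
    (xt : ℕ → X) (K : ℕ → X → X)
    (hKmono : ∀ n x y, (0:ℝ) ≤ ⟪x - y, K n x - K n y⟫)
    (hKran : ∀ n x, ∃ p u, u ∈ M p ∧ K n x = K n p + γ n • u)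
    (hKinj : ∀ n p q up uq, up ∈ M p → uq ∈ M q →
      K n p + γ n • up = K n q + γ n • uq → p = q)
    (y ystar x xh : ℕ → X)
    (hy : ∀ n, (γ n)⁻¹ • (K n (xt n) - K n (y n)) ∈ M (y n))
    (hystar : ∀ n, ystar n = (γ n)⁻¹ • (K n (xt n) - K n (y n)))
    (hx0 : x 0 = x₀)
    (hxh : ∀ n, xh n =
      if ⟪y n - x n, ystar n⟫ < 0 then
        x n + (⟪y n - x n, ystar n⟫ / ‖ystar n‖ ^ 2) • ystar n
      else x n)
    (hQ : ∀ n, x (n + 1) ∈ Hset x₀ (x n) ∩ Hset (x n) (xh n) ∧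
      ∀ w ∈ Hset x₀ (x n) ∩ Hset (x n) (xh n), ‖x₀ - x (n + 1)‖ ≤ ‖x₀ - w‖) :
    (Summable (fun n => ‖x (n + 1) - x n‖ ^ 2) ∧
      Summable (fun n => ‖xh n - x n‖ ^ 2)) ∧
    (Tendsto (fun n => xt n - x n) atTop (𝓝 (0:X)) →
      (Tendsto (fun n => ⟪xt n - y n, nrmz (K n (xt n) - K n (y n))⟫) atTop (𝓝 (0:ℝ)) →
        (∀ u : X, Tendsto (fun n => ⟪xt n - y n, u⟫) atTop (𝓝 (0:ℝ))) ∧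
          Tendsto (fun n => K n (xt n) - K n (y n)) atTop (𝓝 (0:X))) →
      ∃ z, (0:X) ∈ M z ∧ (∀ w, (0:X) ∈ M w → ‖x₀ - z‖ ≤ ‖x₀ - w‖) ∧
        Tendsto x atTop (𝓝 z)) :=
  stmt_1_general M hMmono hMmax hZ x₀ γ hγpos hγinf xt K hKmono y ystar x xh hy hystar hx0 hxh hQ
end

section
/- Let X be a real Hilbert space, let M : X → 2^X be maximally monotone, and let K : X → X be averaged with constant α ∈ (0,1). Suppose K + M is 1-strongly monotone, i.e., ⟪x−y, u−v⟫ ≥ ‖x−y‖² for all (x,u),(y,v) in the graph of K + M. Then K + M is surjective with single-valued inverse, and the warped resolvent J^K_M = (K + M)^{-1} ∘ K is averaged with constant 1/(2−α). -/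
/-!
Write `K = (1 - α) Id + α N` with `N` nonexpansive; then `Id - K` is monotone, so for every `w`
the operator `K + M - Id - w` is not only monotone (by 1-strong monotonicity of `K + M`) but
maximal monotone. Minty's theorem (`∃ p, -p ∈ A p` for maximal monotone `A`) then solves
`w ∈ (K + M) p`, and strong monotonicity makes `p` unique.

Minty's theorem is proved by minimizing the Fitzpatrick function of `A` plus `½‖·‖²` on `X × X`.
The minimizer `(x, u)` exists by strong convexity and completeness, and its variational inequality
shows that `(p, -p)` with `p = (x - u) / 2` is monotonically related to the graph of `A`.

For `p = Jr x`, `q = Jr y`, strong monotonicity gives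
`‖p - q‖² ≤ ⟪p - q, (1 - α)(x - y) + α (N x - N y)⟫`, and expanding the square shows that this is
exactly the nonexpansiveness of `x ↦ x + (2 - α)(Jr x - x)`.
-/

open RealInnerProductSpace Filter Topology

section HalfNormSq

variable {H : Type*} [NormedAddCommGroup H] [InnerProductSpace ℝ H]

theorem exists_isMinOn_snd_add_half_norm_sq [CompleteSpace H] {S : Set (H × ℝ)}
    (hconv : Convex ℝ S) (hclosed : IsClosed S) (hne : S.Nonempty)
    (hbdd : BddBelow ((fun p : H × ℝ => p.2 + ‖p.1‖ ^ 2 / 2) '' S)) :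
    ∃ p ∈ S, IsMinOn (fun p : H × ℝ => p.2 + ‖p.1‖ ^ 2 / 2) S p := by
  set Φ := fun p : H × ℝ => p.2 + ‖p.1‖ ^ 2 / 2
  set m := sInf (Φ '' S)
  have hm : ∀ p ∈ S, m ≤ Φ p := fun p hp => csInf_le hbdd ⟨p, hp, rfl⟩
  have hmid : ∀ p ∈ S, ∀ q ∈ S, ‖p.1 - q.1‖ ^ 2 ≤ 4 * (Φ p - m) + 4 * (Φ q - m) := by
    intro p hp q hq
    have h := hm _ (hconv hp hq (by norm_num : (0:ℝ) ≤ 1 / 2) (by norm_num : (0:ℝ) ≤ 1 / 2)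
      (by norm_num))
    have hpar := parallelogram_law_with_norm ℝ p.1 q.1
    simp only [Φ, Prod.fst_add, Prod.snd_add, Prod.smul_fst, Prod.smul_snd, smul_eq_mul,
      ← smul_add, norm_smul, Real.norm_eq_abs, abs_of_pos (one_half_pos : (0:ℝ) < 1 / 2)] at h ⊢
    nlinarith
  have hseq : ∀ n : ℕ, ∃ p ∈ S, Φ p < m + 1 / (n + 1) := fun n => by
    obtain ⟨_, ⟨p, hp, rfl⟩, hlt⟩ := Real.lt_sInf_add_pos (hne.image Φ) Nat.one_div_pos_of_nat
    exact ⟨p, hp, hlt⟩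
  choose p hpS hpm using hseq
  have hcauchy : CauchySeq fun n => (p n).1 := by
    refine cauchySeq_of_le_tendsto_0' (fun n : ℕ => √(8 * (1 / (n + 1)))) (fun n k hnk => ?_) ?_
    · rw [dist_eq_norm, Real.le_sqrt (norm_nonneg _) (by positivity)]
      have hk : 1 / ((k : ℝ) + 1) ≤ 1 / (n + 1) := Nat.one_div_le_one_div hnk
      linarith [hmid _ (hpS n) _ (hpS k), hpm n, hpm k]
    · simpa using (tendsto_one_div_add_atTop_nhds_zero_nat.const_mul 8).sqrt
  obtain ⟨z, hz⟩ := cauchySeq_tendsto_of_complete hcauchy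
  have hΦ : Tendsto (fun n => Φ (p n)) atTop (𝓝 m) :=
    tendsto_of_tendsto_of_tendsto_of_le_of_le tendsto_const_nhds
      (by simpa using tendsto_one_div_add_atTop_nhds_zero_nat.const_add m)
      (fun n => hm _ (hpS n)) (fun n => (hpm n).le)
  have hs : Tendsto (fun n => (p n).2) atTop (𝓝 (m - ‖z‖ ^ 2 / 2)) := by
    simpa [Φ] using hΦ.sub ((hz.norm.pow 2).div_const 2)
  refine ⟨(z, m - ‖z‖ ^ 2 / 2),
    hclosed.mem_of_tendsto (hz.prodMk_nhds hs) (Eventually.of_forall hpS), fun q hq => ?_⟩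
  simpa [Φ] using hm q hq

theorem IsMinOn.snd_sub_add_inner_nonneg {S : Set (H × ℝ)} {p q : H × ℝ} (hconv : Convex ℝ S)
    (hp : p ∈ S) (hmin : IsMinOn (fun p : H × ℝ => p.2 + ‖p.1‖ ^ 2 / 2) S p) (hq : q ∈ S) :
    0 ≤ q.2 - p.2 + ⟪p.1, q.1 - p.1⟫ := by
  set a := q.2 - p.2 + ⟪p.1, q.1 - p.1⟫
  set b := ‖q.1 - p.1‖ ^ 2 / 2
  have hsegment : ∀ t ∈ Set.Ioc (0 : ℝ) 1, 0 ≤ a + t * b := by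
    rintro t ⟨ht0, ht1⟩
    have h := isMinOn_iff.mp hmin _ (hconv.add_smul_sub_mem hp hq ⟨ht0.le, ht1⟩)
    simp only [Prod.fst_add, Prod.snd_add, Prod.smul_fst, Prod.smul_snd,
      Prod.fst_sub, Prod.snd_sub, smul_eq_mul, norm_add_sq_real, real_inner_smul_right, norm_smul,
      Real.norm_eq_abs, abs_of_pos ht0, mul_pow] at h
    exact nonneg_of_mul_nonneg_right (by linear_combination h) ht0
  have hlim : Tendsto (fun t => a + t * b) (𝓝[>] 0) (𝓝 a) :=
    ((by fun_prop : Continuous fun t : ℝ => a + t * b).tendsto' 0 a (by simp)).mono_left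
      nhdsWithin_le_nhds
  exact ge_of_tendsto hlim (eventually_of_mem (Ioc_mem_nhdsGT one_pos) hsegment)

variable {ι : Type*}

theorem convex_setOf_forall_inner_add_le (a : ι → H) (b : ι → ℝ) :
    Convex ℝ {p : H × ℝ | ∀ i, ⟪p.1, a i⟫ + b i ≤ p.2} := by
  intro p hp q hq s t hs ht hst i
  simp only [Prod.fst_add, Prod.snd_add, Prod.smul_fst, Prod.smul_snd, smul_eq_mul,
    inner_add_left, real_inner_smul_left]
  have hb : b i = s * b i + t * b i := by rw [← add_mul, hst, one_mul]
  nlinarith [mul_le_mul_of_nonneg_left (hp i) hs, mul_le_mul_of_nonneg_left (hq i) ht]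

theorem isClosed_setOf_forall_inner_add_le (a : ι → H) (b : ι → ℝ) :
    IsClosed {p : H × ℝ | ∀ i, ⟪p.1, a i⟫ + b i ≤ p.2} := by
  simp only [Set.ofPred_forall]
  exact isClosed_iInter fun i => isClosed_le (by fun_prop) (by fun_prop)

end HalfNormSq

section MonotoneOperator

variable {X : Type*} [NormedAddCommGroup X] [InnerProductSpace ℝ X]

def IsMonotoneOp (A : X → Set X) : Prop :=
  ∀ x y u v, u ∈ A x → v ∈ A y → 0 ≤ ⟪x - y, u - v⟫

def MonotonicallyRelated (A : X → Set X) (x u : X) : Prop :=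
  ∀ y v, v ∈ A y → 0 ≤ ⟪x - y, u - v⟫

def IsMaximalMonotoneOp (A : X → Set X) : Prop :=
  IsMonotoneOp A ∧ ∀ x u, MonotonicallyRelated A x u → u ∈ A x

theorem isMaximalMonotoneOp_of_forall_subset {A : X → Set X} (hmono : IsMonotoneOp A)
    (hmax : ∀ B : X → Set X, IsMonotoneOp B → (∀ x, A x ⊆ B x) → ∀ x, B x ⊆ A x) :
    IsMaximalMonotoneOp A := by
  refine ⟨hmono, fun x u hxu => ?_⟩
  have hrel : ∀ y v, v ∈ A y → 0 ≤ ⟪y - x, v - u⟫ := fun y v hv => by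
    rw [← neg_sub x y, ← neg_sub u v, inner_neg_neg]
    exact hxu y v hv
  refine hmax (fun z => A z ∪ {w | z = x ∧ w = u}) ?_ (fun _ => Set.subset_union_left) x
    (Or.inr ⟨rfl, rfl⟩)
  rintro y z v w (hv | ⟨rfl, rfl⟩) (hw | ⟨rfl, rfl⟩)
  · exact hmono y z v w hv hw
  · exact hrel y v hv
  · exact hxu z w hw
  · simp

theorem IsMaximalMonotoneOp.add_of_inner_nonpos {M : X → Set X} (hM : IsMaximalMonotoneOp M)
    {C : X → X} (hC : ∀ x y, ⟪x - y, C x - C y⟫ ≤ 0)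
    (hmono : IsMonotoneOp fun p => (C p + ·) '' M p) :
    IsMaximalMonotoneOp fun p => (C p + ·) '' M p := by
  refine ⟨hmono, fun x u hxu => ⟨u - C x, hM.2 x _ fun y v hv => ?_, add_sub_cancel _ _⟩⟩
  have h := hxu y (C y + v) ⟨v, hv, rfl⟩
  have hsplit : u - C x - v = (u - (C y + v)) - (C x - C y) := by abel
  rw [hsplit, inner_sub_right]
  linarith [hC x y]

theorem IsMaximalMonotoneOp.exists_neg_mem [CompleteSpace X] {A : X → Set X}
    (hA : IsMaximalMonotoneOp A) : ∃ p, -p ∈ A p := by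
  obtain ⟨y₀, v₀, h₀⟩ : ∃ y v, v ∈ A y := by
    by_contra! h
    exact h 0 0 (hA.2 0 0 fun y v hv => (h y v hv).elim)
  -- `S` is the epigraph of the Fitzpatrick function `(x, u) ↦ ⨆ (y, v) ∈ graph A, ⟪x, v⟫ + ⟪y, u⟫ - ⟪y, v⟫`
  let a (i : {q : X × X // q.2 ∈ A q.1}) : WithLp 2 (X × X) := WithLp.toLp 2 (i.1.2, i.1.1)
  let b (i : {q : X × X // q.2 ∈ A q.1}) : ℝ := -⟪i.1.1, i.1.2⟫
  let S := {p : WithLp 2 (X × X) × ℝ | ∀ i, ⟪p.1, a i⟫ + b i ≤ p.2}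
  have hgraph : ∀ y v, v ∈ A y → (WithLp.toLp 2 (y, v), ⟪y, v⟫) ∈ S := by
    rintro y v hv ⟨⟨y', v'⟩, hv'⟩
    have h := hA.1 y y' v v' hv hv'
    simp only [a, b, WithLp.prod_inner_apply, inner_sub_left, inner_sub_right] at h ⊢
    linarith [real_inner_comm v y']
  have hbdd : BddBelow ((fun p : WithLp 2 (X × X) × ℝ => p.2 + ‖p.1‖ ^ 2 / 2) '' S) := by
    refine ⟨b ⟨(y₀, v₀), h₀⟩ - ‖a ⟨(y₀, v₀), h₀⟩‖ ^ 2 / 2, ?_⟩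
    rintro _ ⟨p, hp, rfl⟩
    nlinarith [hp ⟨(y₀, v₀), h₀⟩, norm_add_sq_real p.1 (a ⟨(y₀, v₀), h₀⟩),
      sq_nonneg ‖p.1 + a ⟨(y₀, v₀), h₀⟩‖]
  obtain ⟨⟨⟨x, u⟩, s⟩, hpS, hmin⟩ := exists_isMinOn_snd_add_half_norm_sq
    (convex_setOf_forall_inner_add_le a b) (isClosed_setOf_forall_inner_add_le a b)
    ⟨_, hgraph y₀ v₀ h₀⟩ hbdd
  refine ⟨(1 / 2 : ℝ) • (x - u), hA.2 _ _ fun y v hv => ?_⟩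
  have h₁ := hpS ⟨(y, v), hv⟩
  have h₂ := hmin.snd_sub_add_inner_nonneg (convex_setOf_forall_inner_add_le a b) hpS
    (hgraph y v hv)
  simp only [a, b, WithLp.prod_inner_apply, WithLp.ofLp_sub, Prod.fst_sub, Prod.snd_sub] at h₁ h₂
  -- `4 ⟪p - y, -p - v⟫` is `‖x + u‖²` plus twice the sum of the slacks in `h₁` and `h₂`
  simp only [inner_sub_left, inner_sub_right, inner_neg_right, real_inner_smul_left,
    real_inner_smul_right, real_inner_self_eq_norm_sq, norm_smul, mul_pow, Real.norm_eq_abs,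
    sq_abs] at h₂ ⊢
  linarith [norm_add_sq_real x u, norm_sub_sq_real x u, sq_nonneg ‖x + u‖, real_inner_comm x y,
    real_inner_comm u v, real_inner_comm y u]

theorem existsUnique_mem_add_of_strongly_monotone [CompleteSpace X] {M : X → Set X}
    (hM : IsMaximalMonotoneOp M) {K : X → X} (hK : ∀ x y, ⟪x - y, (K x - x) - (K y - y)⟫ ≤ 0)
    (hsm : ∀ x y u v, u ∈ M x → v ∈ M y → ‖x - y‖ ^ 2 ≤ ⟪x - y, (K x + u) - (K y + v)⟫)
    (w : X) : ∃! p, ∃ u ∈ M p, w = K p + u := by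
  have hB : IsMaximalMonotoneOp fun p => (K p - p - w + ·) '' M p := by
    refine hM.add_of_inner_nonpos (fun x y => ?_) ?_
    · simpa only [sub_sub_sub_cancel_right] using hK x y
    · rintro x y _ _ ⟨u, hu, rfl⟩ ⟨v, hv, rfl⟩
      have hdiff : K x - x - w + u - (K y - y - w + v) = (K x + u - (K y + v)) - (x - y) := by
        abel
      rw [hdiff, inner_sub_right, real_inner_self_eq_norm_sq]
      linarith [hsm x y u v hu hv]
  obtain ⟨p, u, hu, hp⟩ := hB.exists_neg_mem
  have hw : w = K p + u := by linear_combination (norm := module) -hp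
  refine ⟨p, ⟨u, hu, hw⟩, fun q ⟨v, hv, hq⟩ => ?_⟩
  have h := hsm q p v u hv hu
  rw [← hq, ← hw, sub_self, inner_zero_right] at h
  simpa [sub_eq_zero] using h

end MonotoneOperator

section Averaged

variable {X : Type*} [NormedAddCommGroup X] [InnerProductSpace ℝ X]

theorem inner_sub_map_sub_nonpos_of_averaged {α : ℝ} (hα : 0 ≤ α) {K N : X → X}
    (hN : ∀ x y, ‖N x - N y‖ ≤ ‖x - y‖) (hK : ∀ x, K x = (1 - α) • x + α • N x) (x y : X) :
    ⟪x - y, (K x - x) - (K y - y)⟫ ≤ 0 := by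
  have hdiff : (K x - x) - (K y - y) = α • ((N x - N y) - (x - y)) := by
    rw [hK, hK]; module
  have hcs : ⟪x - y, N x - N y⟫ ≤ ‖x - y‖ ^ 2 := by
    nlinarith [real_inner_le_norm (x - y) (N x - N y), hN x y, norm_nonneg (x - y)]
  rw [hdiff, real_inner_smul_right, inner_sub_right, real_inner_self_eq_norm_sq]
  exact mul_nonpos_of_nonneg_of_nonpos hα (by linarith)

theorem norm_add_smul_sub_le_of_sq_le_inner {α : ℝ} (hα0 : 0 ≤ α) (hα2 : α ≤ 2) {d e n : X}
    (hn : ‖n‖ ≤ ‖d‖) (he : ‖e‖ ^ 2 ≤ ⟪e, (1 - α) • d + α • n⟫) :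
    ‖d + (2 - α) • (e - d)‖ ≤ ‖d‖ := by
  have hen : ⟪e, n⟫ ≤ ‖e‖ * ‖d‖ :=
    (real_inner_le_norm e n).trans (mul_le_mul_of_nonneg_left hn (norm_nonneg e))
  have hexp : ‖d + (2 - α) • (e - d)‖ ^ 2 =
      (1 - α) ^ 2 * ‖d‖ ^ 2 - 2 * (2 - α) * (1 - α) * ⟪e, d⟫ + (2 - α) ^ 2 * ‖e‖ ^ 2 := by
    rw [show d + (2 - α) • (e - d) = (α - 1) • d + (2 - α) • e by module, norm_add_sq_real,
      norm_smul, norm_smul, real_inner_smul_left, real_inner_smul_right, mul_pow, mul_pow,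
      Real.norm_eq_abs, Real.norm_eq_abs, sq_abs, sq_abs, real_inner_comm]
    ring
  rw [inner_add_right, real_inner_smul_right, real_inner_smul_right] at he
  refine (pow_le_pow_iff_left₀ (norm_nonneg _) (norm_nonneg _) two_ne_zero).mp ?_
  rw [hexp]
  nlinarith [mul_nonneg (mul_nonneg hα0 (by linarith : (0:ℝ) ≤ 2 - α))
    (sq_nonneg (‖e‖ - ‖d‖)), mul_le_mul_of_nonneg_left hen hα0]

end Averaged

/-- Proposition 3.12: if `K` is `α`-averaged and `K + M` is `1`-strongly monotone,
then `K + M` is surjective with single-valued inverse and the warped resolvent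
`J^K_M = (K + M)⁻¹ ∘ K` is `1/(2−α)`-averaged. A map `T` is `c`-averaged if
`Id + (1/c)(T − Id)` is nonexpansive; note `1/(1/(2−α)) = 2 − α`. -/
theorem stmt_18
    {X : Type*} [NormedAddCommGroup X] [InnerProductSpace ℝ X] [CompleteSpace X]
    (M : X → Set X)
    (hMmono : ∀ x y u v, u ∈ M x → v ∈ M y → (0:ℝ) ≤ ⟪x - y, u - v⟫)
    (hMmax : ∀ A : X → Set X,
      (∀ x y u v, u ∈ A x → v ∈ A y → (0:ℝ) ≤ ⟪x - y, u - v⟫) →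
      (∀ x, M x ⊆ A x) → ∀ x, A x ⊆ M x)
    (K : X → X) (α : ℝ) (hα : α ∈ Set.Ioo (0:ℝ) 1)
    -- K is α-averaged
    (hKavg : ∀ x y, ‖(x + (1 / α) • (K x - x)) - (y + (1 / α) • (K y - y))‖ ≤ ‖x - y‖)
    -- K + M is 1-strongly monotone
    (hsm : ∀ x y u v, u ∈ M x → v ∈ M y →
      ‖x - y‖ ^ 2 ≤ ⟪x - y, (K x + u) - (K y + v)⟫) :
    -- K + M is surjective with single-valued inverse
    (∀ w : X, ∃! p, ∃ u ∈ M p, w = K p + u) ∧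
    -- and the warped resolvent J^K_M is 1/(2−α)-averaged
    ∀ Jr : X → X, (∀ x, K x - K (Jr x) ∈ M (Jr x)) →
      ∀ x y, ‖(x + (2 - α) • (Jr x - x)) - (y + (2 - α) • (Jr y - y))‖ ≤ ‖x - y‖ := by
  obtain ⟨hα0, hα1⟩ := hα
  set N : X → X := fun x => x + (1 / α) • (K x - x)
  have hK : ∀ x, K x = (1 - α) • x + α • N x := fun x => by
    simp only [N, smul_add, smul_smul, mul_one_div_cancel hα0.ne', one_smul]; module
  refine ⟨existsUnique_mem_add_of_strongly_monotone
    (isMaximalMonotoneOp_of_forall_subset hMmono hMmax)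
    (inner_sub_map_sub_nonpos_of_averaged hα0.le hKavg hK) hsm, fun Jr hJr x y => ?_⟩
  have h := hsm _ _ _ _ (hJr x) (hJr y)
  rw [add_sub_cancel, add_sub_cancel, hK x, hK y] at h
  have hgoal : (x + (2 - α) • (Jr x - x)) - (y + (2 - α) • (Jr y - y)) =
      (x - y) + (2 - α) • ((Jr x - Jr y) - (x - y)) := by module
  rw [hgoal]
  refine norm_add_smul_sub_le_of_sq_le_inner hα0.le (by linarith) (hKavg x y) ?_
  convert h using 2
  module
end
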